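/- arXiv:1708.01940 — 10 statements merged into one kernel-verified Lean document; each statement's English description precedes it below -/
import Mathlib

section
/- Let q = 2^n, α ∈ F_q nonzero, and let f ∈ F_q[x] be a polynomial of degree m. Set d = (m-1)/2 if m is odd and d = (m-2)/2 if m is even. Then there exists a unique polynomial g ∈ F_q[x] of degree at most d such that D_α f(x) = g(x(x+α)). -/
open Polynomial

section Aux
variable {F : Type*} [Field F] [CharP F 2]

private lemma qpoly_natDegree (α : F) : (X * (X + C α)).natDegree = 2 := by
  compute_degree!

private lemma qpoly_monic (α : F) : (X * (X + C α)).Monic :=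
  monic_X.mul (monic_X_add_C α)

private lemma qpoly_inv (α : F) : (X * (X + C α)).comp (X + C α) = X * (X + C α) := by
  simp [mul_comp, add_comp, add_assoc, CharTwo.add_self_eq_zero]
  ring

private lemma even_deg_of_inv (α : F) (hα : α ≠ 0) (h : F[X]) (h0 : h ≠ 0)
    (hinv : h.comp (X + C α) = h) : Even h.natDegree := by
  set k := h.natDegree with hk
  rcases Nat.eq_zero_or_pos k with h1 | h1
  · simp [h1]
  have ht : taylor α h = h := by rw [taylor_apply, hinv]
  have hc : (taylor α h).coeff (k - 1) = h.coeff (k - 1) := by rw [ht]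
  rw [taylor_coeff] at hc
  set p := hasseDeriv (k - 1) h with hp
  have hdeg : p.natDegree ≤ 1 :=
    le_trans (natDegree_hasseDeriv_le h (k - 1)) (by omega)
  have hc0 : p.coeff 0 = h.coeff (k - 1) := by
    rw [hp, hasseDeriv_coeff]; simp
  have hch : k.choose (k - 1) = k := by
    have := Nat.choose_symm (by omega : k - 1 ≤ k)
    rw [show k - (k - 1) = 1 by omega] at this
    rw [← this, Nat.choose_one_right]
  have hc1 : p.coeff 1 = (k : F) * h.coeff k := by
    rw [hp, hasseDeriv_coeff]
    have e : 1 + (k - 1) = k := by omega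
    rw [e, hch]
  have heval : p.eval α = p.coeff 0 + p.coeff 1 * α := by
    conv_lhs => rw [eq_X_add_C_of_natDegree_le_one hdeg]
    rw [eval_add, eval_mul, eval_C, eval_C, eval_X]
    ring
  rw [heval, hc0] at hc
  have hz : p.coeff 1 * α = 0 := by linear_combination hc
  rw [hc1] at hz
  have hk0 : (k : F) = 0 := by
    have hlc : h.coeff k ≠ 0 := by
      rw [hk]; exact leadingCoeff_ne_zero.mpr h0
    rcases mul_eq_zero.mp hz with h2 | h2
    · rcases mul_eq_zero.mp h2 with h3 | h3
      · exact h3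
      · exact absurd h3 hlc
    · exact absurd h2 hα
  have := (CharP.cast_eq_zero_iff F 2 k).mp hk0
  exact Nat.even_iff.mpr (by omega)

private lemma exists_g (α : F) (hα : α ≠ 0) (N : ℕ) :
    ∀ h : F[X], h.natDegree ≤ N → h.comp (X + C α) = h →
      ∃ g : F[X], g.comp (X * (X + C α)) = h := by
  induction N using Nat.strong_induction_on with
  | _ N ih =>
    intro h hN hinv
    by_cases h0 : h = 0
    · exact ⟨0, by simp [h0]⟩
    set q : F[X] := X * (X + C α) with hq
    obtain ⟨k, hk⟩ := even_deg_of_inv α hα h h0 hinv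
    rcases Nat.eq_zero_or_pos h.natDegree with hd0 | hd1
    · refine ⟨C (h.coeff 0), ?_⟩
      rw [C_comp, (Polynomial.eq_C_of_natDegree_eq_zero hd0).symm]
    set c := h.leadingCoeff with hc
    have hcne : c ≠ 0 := leadingCoeff_ne_zero.mpr h0
    set r : F[X] := C c * q ^ k with hr
    have hrdeg : r.natDegree = 2 * k := by
      rw [hr, natDegree_C_mul hcne, natDegree_pow, qpoly_natDegree]; ring
    have hrlc : r.leadingCoeff = c := by
      rw [hr, leadingCoeff_mul, leadingCoeff_C, leadingCoeff_pow,
        (qpoly_monic α).leadingCoeff, one_pow, mul_one]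
    have hdeg_eq : h.natDegree = 2 * k := by omega
    have hrne : r ≠ 0 := by
      intro hzero
      rw [hzero] at hrlc
      exact hcne (by simpa using hrlc.symm)
    have hdd : r.degree = h.degree := by
      rw [degree_eq_natDegree hrne, degree_eq_natDegree h0, hrdeg, hdeg_eq]
    have hlt : (h - r).degree < h.degree := degree_sub_lt hdd.symm h0 (by rw [hrlc, hc])
    have hinv' : (h - r).comp (X + C α) = h - r := by
      rw [sub_comp, hinv, hr, mul_comp, pow_comp, C_comp, qpoly_inv]
    by_cases hhr : h - r = 0
    · refine ⟨C c * X ^ k, ?_⟩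
      have : h = r := by linear_combination hhr
      rw [this, hr, mul_comp, pow_comp, C_comp, X_comp]
    · have hlt' : (h - r).natDegree < N := by
        have h1 : (h - r).natDegree < h.natDegree := natDegree_lt_natDegree hhr hlt
        omega
      obtain ⟨g', hg'⟩ := ih (h - r).natDegree hlt' (h - r) le_rfl hinv'
      refine ⟨g' + C c * X ^ k, ?_⟩
      rw [add_comp, mul_comp, pow_comp, C_comp, X_comp, hg', ← hr]
      ring

end Aux

/-- Existence and uniqueness of `g = L_α f` with `g(x(x+α)) = D_α f(x)`. -/
theorem stmt1 (n m : ℕ) (hn : 1 ≤ n) (α : GaloisField 2 n) (hα : α ≠ 0)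
    (f : Polynomial (GaloisField 2 n)) (hf : f.natDegree = m) :
    ∃! g : Polynomial (GaloisField 2 n),
      g.natDegree ≤ (if Odd m then (m - 1) / 2 else (m - 2) / 2) ∧
      g.comp (X * (X + C α)) = f + f.comp (X + C α) := by
  set q : Polynomial (GaloisField 2 n) := X * (X + C α) with hq
  set h : Polynomial (GaloisField 2 n) := f + f.comp (X + C α) with hh
  have hXa : (X + C α).comp (X + C α) = (X : Polynomial (GaloisField 2 n)) := by
    simp [add_comp, add_assoc, CharTwo.add_self_eq_zero]
  have hinv : h.comp (X + C α) = h := by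
    rw [hh, add_comp, comp_assoc, hXa, comp_X, add_comm]
  -- uniqueness helper
  have huniq : ∀ g₁ g₂ : Polynomial (GaloisField 2 n), g₁.comp q = g₂.comp q → g₁ = g₂ := by
    intro g₁ g₂ he
    have hz : (g₁ - g₂).comp q = 0 := by rw [sub_comp, he, sub_self]
    rcases comp_eq_zero_iff.mp hz with h1 | ⟨_, h2⟩
    · exact sub_eq_zero.mp h1
    · exfalso
      have := qpoly_natDegree α
      rw [← hq, h2, natDegree_C] at this
      omega
  obtain ⟨g, hg⟩ := exists_g α hα h.natDegree h le_rfl hinv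
  have hbound : g.natDegree ≤ (if Odd m then (m - 1) / 2 else (m - 2) / 2) := by
    by_cases hzero : h = 0
    · have : g = 0 := huniq g 0 (by rw [hg, hzero, zero_comp])
      simp [this]
    · -- h ≠ 0, so f ≠ 0 and degree h < degree f
      have hf0 : f ≠ 0 := by
        intro h0
        exact hzero (by simp [hh, h0])
      have hcompne : f.comp (X + C α) ≠ 0 := by
        intro h0
        have := leadingCoeff_comp (by simp : (X + C α : Polynomial (GaloisField 2 n)).natDegree ≠ 0) (p := f)
        rw [h0, leadingCoeff_zero, (monic_X_add_C α).leadingCoeff, one_pow, mul_one] at this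
        exact hf0 (leadingCoeff_eq_zero.mp this.symm)
      have hlceq : (f.comp (X + C α)).leadingCoeff = f.leadingCoeff := by
        rw [leadingCoeff_comp (by simp : (X + C α : Polynomial (GaloisField 2 n)).natDegree ≠ 0),
          (monic_X_add_C α).leadingCoeff, one_pow, mul_one]
      have hdeq : (f.comp (X + C α)).degree = f.degree := by
        rw [degree_eq_natDegree hcompne, degree_eq_natDegree hf0,
          natDegree_comp, natDegree_X_add_C, mul_one]
      have hsub : h = f - f.comp (X + C α) := by
        rw [hh, CharTwo.sub_eq_add]
      have hdlt : h.degree < f.degree := by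
        rw [hsub]
        exact degree_sub_lt hdeq.symm hf0 hlceq.symm
      have hnlt : h.natDegree < m := by
        rw [← hf]
        exact natDegree_lt_natDegree hzero hdlt
      have hgne : g ≠ 0 := by
        intro h0
        rw [h0, zero_comp] at hg
        exact hzero hg.symm
      have hcompdeg : h.natDegree = g.natDegree * 2 := by
        rw [← hg, natDegree_comp, ← hq, qpoly_natDegree]
      by_cases hm : Odd m
      · rw [if_pos hm]; omega
      · rw [if_neg hm]
        obtain ⟨t, ht⟩ := Nat.not_odd_iff_even.mp hm
        omega
  exact ⟨g, ⟨hbound, hg⟩, fun g' hg' => huniq g' g (by rw [hg'.2, hg])⟩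
end

section
/- Let q = 2^n, α ∈ F_q nonzero, and let m ≥ 1. The linear map L_α sending a polynomial f of degree at most m to the unique polynomial g of degree at most d with g(x(x+α)) = D_α f(x) is surjective from the space of polynomials of degree ≤ m onto the space of polynomials of degree ≤ d, where d = (m-1)/2 for m odd and d = (m-2)/2 for m even. -/
open Polynomial

/-- Surjectivity of `L_α` from polynomials of degree ≤ m onto polynomials of degree ≤ d. -/
theorem stmt2 (n m : ℕ) (hn : 1 ≤ n) (hm : 1 ≤ m) (α : GaloisField 2 n) (hα : α ≠ 0)
    (g : Polynomial (GaloisField 2 n))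
    (hg : g.natDegree ≤ (if Odd m then (m - 1) / 2 else (m - 2) / 2)) :
    ∃ f : Polynomial (GaloisField 2 n), f.natDegree ≤ m ∧
      g.comp (X * (X + C α)) = f + f.comp (X + C α) := by
  set N : Polynomial (GaloisField 2 n) := X * (X + C α) with hN
  have h2 : (2 : Polynomial (GaloisField 2 n)) = 0 := by
    have : (2 : GaloisField 2 n) = 0 := by
      have := CharP.cast_eq_zero (GaloisField 2 n) 2
      exact_mod_cast this
    rw [(map_ofNat C 2).symm, this, map_zero]
  refine ⟨C α⁻¹ * (X * g.comp N), ?_, ?_⟩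
  · have hNdeg : N.natDegree ≤ 2 := by
      calc N.natDegree ≤ (X : Polynomial (GaloisField 2 n)).natDegree
            + (X + C α).natDegree := natDegree_mul_le
        _ ≤ 1 + 1 := by
            gcongr
            · exact natDegree_X_le
            · exact le_trans (natDegree_add_le _ _) (by simp)
        _ = 2 := rfl
    have h1 : (X * g.comp N).natDegree ≤ 1 + g.natDegree * 2 := by
      calc (X * g.comp N).natDegree
          ≤ (X : Polynomial (GaloisField 2 n)).natDegree + (g.comp N).natDegree :=
            natDegree_mul_le
        _ ≤ 1 + g.natDegree * N.natDegree := by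
            gcongr
            · exact natDegree_X_le
            · exact natDegree_comp_le
        _ ≤ 1 + g.natDegree * 2 := by gcongr
    refine le_trans (natDegree_C_mul_le _ _) (le_trans h1 ?_)
    rcases Nat.even_or_odd m with he | ho
    · rw [if_neg (by simpa using he)] at hg
      obtain ⟨k, hk⟩ := he
      omega
    · rw [if_pos ho] at hg
      obtain ⟨k, hk⟩ := ho
      omega
  · have hNcomp : N.comp (X + C α) = N := by
      rw [hN]
      simp only [mul_comp, add_comp, X_comp, C_comp]
      linear_combination (X + C α) * h2 * C α
    have hinv : (C α⁻¹ : Polynomial (GaloisField 2 n)) * C α = 1 := by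
      rw [← C_mul, inv_mul_cancel₀ hα, C_1]
    simp only [mul_comp, C_comp, X_comp, add_comp, comp_assoc, hNcomp]
    linear_combination (-(C α⁻¹ * X * g.comp N)) * h2 + (-(g.comp N)) * hinv
end

section
/- Let q = 2^n, let f ∈ F_q[x], and let α ∈ F_q*. The polynomials (L_α f)' and (L_α f)^[2] have a common root in the algebraic closure of F_2 if and only if (D_α f)' and (D_α f)^[2] have a common root in the algebraic closure of F_2. -/
/-!
In characteristic 2 we have `T_α(x + u) = T_α(x) + α u + u²`, so comparing the Taylor expansions of
`g ∘ T_α` at `x` and of `g` at `T_α(x)` gives the identities `(g ∘ T_α)' = α · g' ∘ T_α` and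
`(g ∘ T_α)^[2] = g' ∘ T_α + α² · g^[2] ∘ T_α`. As `α ≠ 0`, a point `x` is a common root of the
two derivatives of `D_α f = g ∘ T_α` exactly when `T_α(x)` is a common root of `g'` and `g^[2]`,
and `T_α` is surjective on an algebraically closed field.
-/

open Polynomial

namespace Polynomial

variable {R : Type*} [CommRing R]

lemma hasseDeriv_map {S : Type*} [CommRing S] (φ : R →+* S) (k : ℕ) (p : R[X]) :
    (hasseDeriv k p).map φ = hasseDeriv k (p.map φ) := by
  ext m
  simp [hasseDeriv_coeff, coeff_map]

lemma eval_map_C (p q : R[X]) : eval q (p.map C) = p.comp q := by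
  rw [eval_map]
  rfl

lemma hasseDeriv_eq_coeff_taylor_X (k : ℕ) (p : R[X]) :
    hasseDeriv k p = (taylor X (p.map C)).coeff k := by
  rw [taylor_coeff, ← hasseDeriv_map, eval_map_C, comp_X]

lemma coeff_two_X_mul_X_add_C_pow (a : R) (m : ℕ) :
    ((X * (X + C a)) ^ m).coeff 2 = if m = 1 then 1 else if m = 2 then a ^ 2 else 0 := by
  rw [mul_pow, mul_comm, coeff_mul_X_pow']
  match m with
  | 0 => simp [coeff_one]
  | 1 => simp
  | 2 => simp [sq, mul_coeff_zero]
  | m + 3 => simp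

lemma coeff_two_comp_X_mul_X_add_C (H : R[X]) (a : R) :
    (H.comp (X * (X + C a))).coeff 2 = H.coeff 1 + a ^ 2 * H.coeff 2 := by
  rw [comp_eq_sum_left, coeff_sum, Polynomial.sum_def]
  have h : ∀ e ∈ H.support, (C (H.coeff e) * (X * (X + C a)) ^ e).coeff 2
      = (if e = 1 then H.coeff e else 0) + (if e = 2 then a ^ 2 * H.coeff e else 0) := by
    intro e _
    rw [coeff_C_mul, coeff_two_X_mul_X_add_C_pow]
    split_ifs <;> simp_all [mul_comm]
  rw [Finset.sum_congr rfl h, Finset.sum_add_distrib, Finset.sum_ite_eq', Finset.sum_ite_eq']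
  by_cases h1 : 1 ∈ H.support <;> by_cases h2 : 2 ∈ H.support <;>
    simp [notMem_support_iff.mp, *]

section CharTwo

variable [CharP R 2]

lemma X_mul_X_add_C_comp_X_add_C (a x : R) :
    (X * (X + C a)).comp (X + C x) = X * (X + C a) + C (x * (x + a)) := by
  simp only [mul_comp, X_comp, add_comp, C_comp, map_mul, map_add]
  linear_combination (X * C x) * (CharTwo.two_eq_zero : (2 : R[X]) = 0)

lemma taylor_comp_X_mul_X_add_C (a x : R) (G : R[X]) :
    taylor x (G.comp (X * (X + C a))) = (taylor (x * (x + a)) G).comp (X * (X + C a)) := by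
  rw [taylor_apply, taylor_apply, comp_assoc, comp_assoc, X_mul_X_add_C_comp_X_add_C, add_comp,
    X_comp, C_comp]

lemma derivative_comp_X_mul_X_add_C (a : R) (G : R[X]) :
    derivative (G.comp (X * (X + C a))) = C a * (derivative G).comp (X * (X + C a)) := by
  rw [derivative_comp]
  congr 1
  simp only [derivative_mul, derivative_X, derivative_add, derivative_C]
  linear_combination (X : R[X]) * (CharTwo.two_eq_zero : (2 : R[X]) = 0)

lemma hasseDeriv_two_comp_X_mul_X_add_C (a : R) (G : R[X]) :
    hasseDeriv 2 (G.comp (X * (X + C a))) =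
      (derivative G).comp (X * (X + C a)) + C (a ^ 2) * (hasseDeriv 2 G).comp (X * (X + C a)) := by
  -- Taylor expansion at the generic point `X` turns the pointwise identity into a polynomial one.
  rw [hasseDeriv_eq_coeff_taylor_X, Polynomial.map_comp]
  simp only [Polynomial.map_mul, Polynomial.map_add, map_X, map_C]
  rw [taylor_comp_X_mul_X_add_C, coeff_two_comp_X_mul_X_add_C, taylor_coeff, taylor_coeff,
    hasseDeriv_one, derivative_map, eval_map_C, ← hasseDeriv_map, eval_map_C, C_pow]

end CharTwo

end Polynomial

lemma IsAlgClosed.surjective_mul_add {L : Type*} [Field L] [IsAlgClosed L] (a : L) :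
    Function.Surjective fun x : L ↦ x * (x + a) := by
  intro y
  obtain ⟨x, hx⟩ := IsAlgClosed.exists_root (X * (X + C a) - C y) (by
    rw [show X * (X + C a) - C y = C 1 * X ^ 2 + C a * X + C (-y) by simp; ring,
      degree_quadratic one_ne_zero]
    exact two_ne_zero)
  exact ⟨x, by simpa [sub_eq_zero] using hx⟩

theorem exists_common_root_iff_of_comp_eq {K L : Type*} [Field K] [CharP K 2] [Field L]
    [IsAlgClosed L] [Algebra K L] {α : K} (hα : α ≠ 0) {g D : K[X]}
    (hg : g.comp (X * (X + C α)) = D) :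
    (∃ x : L, aeval x (derivative g) = 0 ∧ aeval x (hasseDeriv 2 g) = 0) ↔
      (∃ x : L, aeval x (derivative D) = 0 ∧ aeval x (hasseDeriv 2 D) = 0) := by
  subst hg
  set a := algebraMap K L α
  have ha : a ≠ 0 := (map_ne_zero_iff _ (algebraMap K L).injective).mpr hα
  have hT (x : L) : aeval x (X * (X + C α)) = x * (x + a) := by simp [a]
  have hD1 (x : L) : aeval x (derivative (g.comp (X * (X + C α)))) =
      a * aeval (x * (x + a)) (derivative g) := by
    rw [derivative_comp_X_mul_X_add_C, map_mul, aeval_C, aeval_comp, hT]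
  have hD2 (x : L) : aeval x (hasseDeriv 2 (g.comp (X * (X + C α)))) =
      aeval (x * (x + a)) (derivative g) + a ^ 2 * aeval (x * (x + a)) (hasseDeriv 2 g) := by
    rw [hasseDeriv_two_comp_X_mul_X_add_C, map_add, map_mul, aeval_C, aeval_comp, aeval_comp, hT,
      map_pow]
  have common_root_iff (x : L) :
      (aeval x (derivative (g.comp (X * (X + C α)))) = 0 ∧
        aeval x (hasseDeriv 2 (g.comp (X * (X + C α)))) = 0) ↔
      (aeval (x * (x + a)) (derivative g) = 0 ∧ aeval (x * (x + a)) (hasseDeriv 2 g) = 0) := by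
    rw [hD1, hD2, mul_eq_zero, or_iff_right ha]
    constructor <;> rintro ⟨h1, h2⟩ <;> simp_all
  simp only [common_root_iff]
  exact (IsAlgClosed.surjective_mul_add a).exists

theorem stmt6_general (n : ℕ) (α : GaloisField 2 n) (hα : α ≠ 0)
    (f g : Polynomial (GaloisField 2 n))
    (hg : g.comp (X * (X + C α)) = f + f.comp (X + C α)) :
    (∃ x : AlgebraicClosure (GaloisField 2 n),
        aeval x (derivative g) = 0 ∧ aeval x (hasseDeriv 2 g) = 0) ↔
    (∃ x : AlgebraicClosure (GaloisField 2 n),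
        aeval x (derivative (f + f.comp (X + C α))) = 0 ∧
        aeval x (hasseDeriv 2 (f + f.comp (X + C α))) = 0) :=
  exists_common_root_iff_of_comp_eq hα hg

/-- `(L_α f)'` and `(L_α f)^[2]` have a common root in the algebraic closure iff
`(D_α f)'` and `(D_α f)^[2]` do. -/
theorem stmt6 (n : ℕ) (hn : 1 ≤ n) (α : GaloisField 2 n) (hα : α ≠ 0)
    (f g : Polynomial (GaloisField 2 n))
    (hg : g.comp (X * (X + C α)) = f + f.comp (X + C α)) :
    (∃ x : AlgebraicClosure (GaloisField 2 n),
        aeval x (derivative g) = 0 ∧ aeval x (hasseDeriv 2 g) = 0) ↔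
    (∃ x : AlgebraicClosure (GaloisField 2 n),
        aeval x (derivative (f + f.comp (X + C α))) = 0 ∧
        aeval x (hasseDeriv 2 (f + f.comp (X + C α))) = 0) :=
  stmt6_general n α hα f g hg
end

section
/- Let m ≥ 7 with m ≡ 3 (mod 4) and f = x^m over F_q with q = 2^n. Then for all nonzero α ∈ F_q, the polynomials (D_α f)'(x) = x^{m-1} + (x+α)^{m-1} and (D_α f)^[2](x) = x^{m-2} + (x+α)^{m-2} have no common root in the algebraic closure of F_2. Consequently the critical points of L_α(x^m) are non-degenerate. -/
open Polynomial

/-- For `m ≡ 3 (mod 4)`, `m ≥ 7`, `f = x^m`, the polynomials `(D_α f)'` and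
`(D_α f)^[2]` have no common root in the algebraic closure of `F_2`. -/
theorem stmt7 (n m : ℕ) (hn : 1 ≤ n) (hm : 7 ≤ m) (hm4 : m % 4 = 3)
    (α : GaloisField 2 n) (hα : α ≠ 0) :
    ¬ ∃ x : AlgebraicClosure (GaloisField 2 n),
        x ^ (m - 1) + (x + algebraMap (GaloisField 2 n) (AlgebraicClosure (GaloisField 2 n)) α) ^ (m - 1) = 0 ∧
        x ^ (m - 2) + (x + algebraMap (GaloisField 2 n) (AlgebraicClosure (GaloisField 2 n)) α) ^ (m - 2) = 0 := by
  rintro ⟨x, h1, h2⟩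
  set A : AlgebraicClosure (GaloisField 2 n) :=
    algebraMap (GaloisField 2 n) (AlgebraicClosure (GaloisField 2 n)) α with hAdef
  have hAne : A ≠ 0 := by
    rw [hAdef]
    exact (map_ne_zero_iff _ (algebraMap (GaloisField 2 n) (AlgebraicClosure (GaloisField 2 n))).injective).mpr hα
  have hy : x + A ≠ 0 := by
    intro h
    rw [h, zero_pow (by omega : m - 2 ≠ 0), add_zero] at h2
    have hx0 : x = 0 := pow_eq_zero_iff (by omega : m - 2 ≠ 0) |>.mp h2
    rw [hx0, zero_add] at h
    exact hAne h
  have e1 : x ^ (m - 1) = -(x + A) ^ (m - 1) := eq_neg_of_add_eq_zero_left h1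
  have e2 : x ^ (m - 2) = -(x + A) ^ (m - 2) := eq_neg_of_add_eq_zero_left h2
  have hm1 : m - 1 = (m - 2) + 1 := by omega
  have key : x * (x + A) ^ (m - 2) = (x + A) * (x + A) ^ (m - 2) := by
    have t1 : x ^ (m - 2) * x = -((x + A) ^ (m - 2) * (x + A)) := by
      rw [← pow_succ, ← pow_succ, ← hm1]; exact e1
    rw [e2] at t1
    linear_combination -t1
  have hx_eq : x = x + A := mul_right_cancel₀ (pow_ne_zero _ hy) key
  exact hAne (by linear_combination -hx_eq)
end

section
/- Let m ≥ 7 be odd. If there exists a nonzero α in the algebraic closure of F_2 such that L_α(x^m) has distinct critical values, then L_α(x^m) has distinct critical values for every nonzero α in the algebraic closure of F_2. -/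
open Polynomial

/-- If `L_α(x^m)` has distinct critical values for one nonzero `α` in the algebraic
closure of `F_2`, then it does for every nonzero `α`. -/
theorem stmt8 (m : ℕ) (hm : 7 ≤ m) (hodd : Odd m)
    (h : ∃ α : AlgebraicClosure (ZMod 2), α ≠ 0 ∧
      ∀ g : Polynomial (AlgebraicClosure (ZMod 2)),
        g.comp (X * (X + C α)) = X ^ m + (X + C α) ^ m →
        ∀ τ η, (derivative g).eval τ = 0 → (derivative g).eval η = 0 →
          g.eval τ = g.eval η → τ = η) :
    ∀ α : AlgebraicClosure (ZMod 2), α ≠ 0 →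
      ∀ g : Polynomial (AlgebraicClosure (ZMod 2)),
        g.comp (X * (X + C α)) = X ^ m + (X + C α) ^ m →
        ∀ τ η, (derivative g).eval τ = 0 → (derivative g).eval η = 0 →
          g.eval τ = g.eval η → τ = η := by
  obtain ⟨α, hα, hprop⟩ := h
  intro β hβ g hg τ η hτ hη hval
  obtain ⟨c, hc0, hβc⟩ : ∃ c : AlgebraicClosure (ZMod 2), c ≠ 0 ∧ β = c * α :=
    ⟨β * α⁻¹, mul_ne_zero hβ (inv_ne_zero hα),
      by rw [mul_assoc, inv_mul_cancel₀ hα, mul_one]⟩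
  set g' : Polynomial (AlgebraicClosure (ZMod 2)) :=
    C ((c ^ m)⁻¹) * (g.comp (C (c ^ 2) * X)) with hg'
  have hCβ : C β = C c * C α := by rw [hβc, C_mul]
  have hX : C c * X + C β = C c * (X + C α) := by rw [hCβ]; ring
  have key : (C (c ^ 2) * X).comp (X * (X + C α)) = (X * (X + C β)).comp (C c * X) := by
    simp only [mul_comp, C_comp, X_comp, add_comp]
    rw [hX, pow_two, C_mul]; ring
  have hcomp : g'.comp (X * (X + C α)) = X ^ m + (X + C α) ^ m := by
    rw [hg', mul_comp, C_comp, comp_assoc, key, ← comp_assoc, hg]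
    simp only [add_comp, pow_comp, X_comp, C_comp]
    rw [hX]
    have e1 : (C c * X) ^ m = C (c ^ m) * X ^ m := by rw [mul_pow, C_pow]
    have e2 : (C c * (X + C α)) ^ m = C (c ^ m) * (X + C α) ^ m := by rw [mul_pow, C_pow]
    simp only [e1, e2]
    rw [← mul_add, ← mul_assoc, ← C_mul, inv_mul_cancel₀ (pow_ne_zero m hc0), C_1, one_mul]
  have hcc : ∀ t : AlgebraicClosure (ZMod 2), c ^ 2 * (t * (c ^ 2)⁻¹) = t := by
    intro t; field_simp
  have hdq : derivative (C (c ^ 2) * X) = C (c ^ 2) := by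
    rw [derivative_C_mul, derivative_X, mul_one]
  have hdg' : derivative g' = C ((c ^ m)⁻¹) *
      (C (c ^ 2) * (derivative g).comp (C (c ^ 2) * X)) := by
    rw [hg', derivative_C_mul, derivative_comp, hdq]
  have hderiv : ∀ t : AlgebraicClosure (ZMod 2),
      (derivative g').eval (t * (c ^ 2)⁻¹)
        = (c ^ m)⁻¹ * (c ^ 2 * (derivative g).eval t) := by
    intro t
    rw [hdg']
    simp only [eval_mul, eval_comp, eval_C, eval_X]
    rw [hcc]
  have heval : ∀ t : AlgebraicClosure (ZMod 2),
      g'.eval (t * (c ^ 2)⁻¹) = (c ^ m)⁻¹ * g.eval t := by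
    intro t
    rw [hg']
    simp only [eval_mul, eval_comp, eval_C, eval_X]
    rw [hcc]
  have hτη := hprop g' hcomp (τ * (c ^ 2)⁻¹) (η * (c ^ 2)⁻¹)
    (by rw [hderiv, hτ]; ring) (by rw [hderiv, hη]; ring)
    (by rw [heval, heval, hval])
  exact mul_right_cancel₀ (inv_ne_zero (pow_ne_zero 2 hc0)) hτη
end

section
/- Let m ≥ 7 be odd, α nonzero in the algebraic closure of F_2. Two distinct elements x_i, x_j satisfy x_i^{m-1} = (x_i+α)^{m-1}, x_j^{m-1} = (x_j+α)^{m-1}, and x_i^m + (x_i+α)^m = x_j^m + (x_j+α)^m if and only if x_i = ζ₁(1+ζ₂)/(ζ₁+ζ₂) · α and x_j = (1+ζ₂)/(ζ₁+ζ₂) · α for two distinct elements ζ₁, ζ₂ ≠ 1 in the algebraic closure of F_2 with ζ₁^{m-1} = ζ₂^{m-1} = ((1+ζ₁)/(1+ζ₂))^{m-1} = 1. -/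
/-!
In characteristic 2, at a point with `x ^ k = (x + a) ^ k` the value `x ^ (k+1) + (x + a) ^ (k+1)`
collapses to `x ^ k * a`, so two such points `x, y` have equal values iff `x ^ k = y ^ k`.
Then `ζ₁ = x / y` and `ζ₂ = (x + a) / (y + a)` are `k`-th roots of unity, and the relation
`(1 + ζ₂) (y + a) = (1 + ζ₁) y` makes `(1 + ζ₁) / (1 + ζ₂) = (y + a) / y` one as well.
Conversely `x = ζ₁ y`, `x + a = ζ₂ (y + a)` is a linear system in `x, y` whose unique solution
is the stated parametrization, and the three root-of-unity conditions give back the equations.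
-/

theorem ne_zero_and_add_ne_zero_of_pow_eq_add_pow {R : Type*} [Semiring R] [NoZeroDivisors R]
    {k : ℕ} (hk : k ≠ 0) {x a : R} (ha : a ≠ 0) (h : x ^ k = (x + a) ^ k) :
    x ≠ 0 ∧ x + a ≠ 0 := by
  have hx : x ≠ 0 := by
    rintro rfl
    rw [zero_pow hk, zero_add, eq_comm, pow_eq_zero_iff hk] at h
    exact ha h
  refine ⟨hx, fun hxa => hx ?_⟩
  rwa [hxa, zero_pow hk, pow_eq_zero_iff hk] at h

section CharTwo

variable {R F : Type*}

theorem pow_succ_add_add_pow_succ_of_pow_eq [CommRing R] [CharP R 2] {k : ℕ} {x a : R}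
    (h : x ^ k = (x + a) ^ k) : x ^ (k + 1) + (x + a) ^ (k + 1) = x ^ k * a := by
  rw [pow_succ, pow_succ, ← h]
  linear_combination x ^ k * x * CharTwo.two_eq_zero (R := R)

theorem one_add_mul_add_eq_of_eq_mul [CommRing R] [CharP R 2] {x y a ζ₁ ζ₂ : R}
    (h₁ : x = ζ₁ * y) (h₂ : x + a = ζ₂ * (y + a)) : (1 + ζ₂) * (y + a) = (1 + ζ₁) * y := by
  linear_combination h₁ - h₂ + a * CharTwo.two_eq_zero (R := R)

variable [Field F] [CharP F 2]

theorem eq_mul_and_add_eq_mul_iff {x y a ζ₁ ζ₂ : F} (hζ : ζ₁ ≠ ζ₂) :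
    (x = ζ₁ * y ∧ x + a = ζ₂ * (y + a)) ↔
      (x = ζ₁ * (1 + ζ₂) / (ζ₁ + ζ₂) * a ∧ y = (1 + ζ₂) / (ζ₁ + ζ₂) * a) := by
  have hd : ζ₁ + ζ₂ ≠ 0 := by rwa [Ne, CharTwo.add_eq_zero]
  constructor
  · rintro ⟨h₁, h₂⟩
    have hy : y = (1 + ζ₂) / (ζ₁ + ζ₂) * a := by
      rw [div_mul_eq_mul_div, eq_div_iff hd]
      linear_combination h₂ - h₁ + (ζ₂ * y - a) * CharTwo.two_eq_zero (R := F)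
    refine ⟨?_, hy⟩
    rw [h₁, hy]
    ring
  · rintro ⟨hx, hy⟩
    refine ⟨by rw [hx, hy]; ring, ?_⟩
    rw [hx, hy]
    field_simp
    linear_combination (ζ₁ - ζ₂ ^ 2) * a * CharTwo.two_eq_zero (R := F)

theorem pow_eq_add_pow_of_eq_mul {k : ℕ} {x y a ζ₁ ζ₂ : F} (hζ₂ : ζ₂ ≠ 1)
    (e₁ : ζ₁ ^ k = 1) (e₂ : ζ₂ ^ k = 1) (e₃ : ((1 + ζ₁) / (1 + ζ₂)) ^ k = 1)
    (h₁ : x = ζ₁ * y) (h₂ : x + a = ζ₂ * (y + a)) :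
    x ^ k = (x + a) ^ k ∧ y ^ k = (y + a) ^ k ∧ x ^ k = y ^ k := by
  have hζ₂' : 1 + ζ₂ ≠ 0 := by rwa [Ne, CharTwo.add_eq_zero, eq_comm]
  have e₃' : (1 + ζ₁) ^ k = (1 + ζ₂) ^ k := by
    rwa [div_pow, div_eq_one_iff_eq (pow_ne_zero k hζ₂')] at e₃
  have hy : y ^ k = (y + a) ^ k := by
    have := congrArg (· ^ k) (one_add_mul_add_eq_of_eq_mul h₁ h₂)
    simp only [mul_pow, e₃'] at this
    exact (mul_left_cancel₀ (pow_ne_zero k hζ₂') this).symm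
  have hx : x ^ k = y ^ k := by rw [h₁, mul_pow, e₁, one_mul]
  have hxa : (x + a) ^ k = (y + a) ^ k := by rw [h₂, mul_pow, e₂, one_mul]
  exact ⟨hx.trans (hy.trans hxa.symm), hy, hx⟩

theorem exists_eq_mul_of_pow_eq_add_pow {k : ℕ} (hk : k ≠ 0) {x y a : F} (ha : a ≠ 0)
    (hne : x ≠ y) (hx : x ^ k = (x + a) ^ k) (hy : y ^ k = (y + a) ^ k) (hxy : x ^ k = y ^ k) :
    ∃ ζ₁ ζ₂ : F, ζ₁ ≠ ζ₂ ∧ ζ₁ ≠ 1 ∧ ζ₂ ≠ 1 ∧ ζ₁ ^ k = 1 ∧ ζ₂ ^ k = 1 ∧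
      ((1 + ζ₁) / (1 + ζ₂)) ^ k = 1 ∧ x = ζ₁ * y ∧ x + a = ζ₂ * (y + a) := by
  obtain ⟨hy₀, hya₀⟩ := ne_zero_and_add_ne_zero_of_pow_eq_add_pow hk ha hy
  obtain ⟨ζ₁, h₁⟩ : ∃ ζ, x = ζ * y := ⟨x / y, (div_mul_cancel₀ x hy₀).symm⟩
  obtain ⟨ζ₂, h₂⟩ : ∃ ζ, x + a = ζ * (y + a) := ⟨(x + a) / (y + a), (div_mul_cancel₀ _ hya₀).symm⟩
  have hζ₁ : ζ₁ ≠ 1 := by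
    rintro rfl
    exact hne (by rw [h₁, one_mul])
  have hζ₂ : ζ₂ ≠ 1 := by
    rintro rfl
    exact hne (add_right_cancel (h₂.trans (one_mul _)))
  have hζ₂' : 1 + ζ₂ ≠ 0 := by rwa [Ne, CharTwo.add_eq_zero, eq_comm]
  have hratio : (1 + ζ₁) / (1 + ζ₂) = (y + a) / y := by
    rw [div_eq_div_iff hζ₂' hy₀]
    linear_combination -one_add_mul_add_eq_of_eq_mul h₁ h₂
  refine ⟨ζ₁, ζ₂, ?_, hζ₁, hζ₂, ?_, ?_, ?_, h₁, h₂⟩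
  · rintro rfl
    exact hζ₁ (mul_right_cancel₀ ha (by linear_combination h₁ - h₂))
  · rw [h₁, mul_pow] at hxy
    exact (mul_eq_right₀ (pow_ne_zero k hy₀)).mp hxy
  · have : (ζ₂ * (y + a)) ^ k = (y + a) ^ k := by rw [← h₂, ← hx, hxy, hy]
    rw [mul_pow] at this
    exact (mul_eq_right₀ (pow_ne_zero k hya₀)).mp this
  · rw [hratio, div_pow, ← hy, div_self (pow_ne_zero k hy₀)]

end CharTwo

theorem stmt10_general (m : ℕ) (hm : 7 ≤ m)
    (α : AlgebraicClosure (ZMod 2)) (hα : α ≠ 0)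
    (xi xj : AlgebraicClosure (ZMod 2)) (hne : xi ≠ xj) :
    (xi ^ (m - 1) = (xi + α) ^ (m - 1) ∧ xj ^ (m - 1) = (xj + α) ^ (m - 1) ∧
      xi ^ m + (xi + α) ^ m = xj ^ m + (xj + α) ^ m) ↔
    ∃ ζ₁ ζ₂ : AlgebraicClosure (ZMod 2), ζ₁ ≠ ζ₂ ∧ ζ₁ ≠ 1 ∧ ζ₂ ≠ 1 ∧
      ζ₁ ^ (m - 1) = 1 ∧ ζ₂ ^ (m - 1) = 1 ∧ ((1 + ζ₁) / (1 + ζ₂)) ^ (m - 1) = 1 ∧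
      xi = ζ₁ * (1 + ζ₂) / (ζ₁ + ζ₂) * α ∧ xj = (1 + ζ₂) / (ζ₁ + ζ₂) * α := by
  obtain ⟨k, rfl⟩ : ∃ k, m = k + 1 := ⟨m - 1, by omega⟩
  have hk : k ≠ 0 := by omega
  simp only [Nat.add_sub_cancel]
  constructor
  · rintro ⟨hi, hj, hval⟩
    rw [pow_succ_add_add_pow_succ_of_pow_eq hi, pow_succ_add_add_pow_succ_of_pow_eq hj] at hval
    obtain ⟨ζ₁, ζ₂, hζ, hζ₁, hζ₂, e₁, e₂, e₃, hlin⟩ :=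
      exists_eq_mul_of_pow_eq_add_pow hk hα hne hi hj (mul_right_cancel₀ hα hval)
    exact ⟨ζ₁, ζ₂, hζ, hζ₁, hζ₂, e₁, e₂, e₃, (eq_mul_and_add_eq_mul_iff hζ).mp hlin⟩
  · rintro ⟨ζ₁, ζ₂, hζ, -, hζ₂, e₁, e₂, e₃, hparam⟩
    obtain ⟨h₁, h₂⟩ := (eq_mul_and_add_eq_mul_iff hζ).mpr hparam
    obtain ⟨hi, hj, hij⟩ := pow_eq_add_pow_of_eq_mul hζ₂ e₁ e₂ e₃ h₁ h₂
    refine ⟨hi, hj, ?_⟩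
    rw [pow_succ_add_add_pow_succ_of_pow_eq hi, pow_succ_add_add_pow_succ_of_pow_eq hj, hij]

/-- Characterization of pairs of critical points with equal critical values for `x^m`
in terms of `(m-1)`-th roots of unity. -/
theorem stmt10 (m : ℕ) (hm : 7 ≤ m) (hodd : Odd m)
    (α : AlgebraicClosure (ZMod 2)) (hα : α ≠ 0)
    (xi xj : AlgebraicClosure (ZMod 2)) (hne : xi ≠ xj) :
    (xi ^ (m - 1) = (xi + α) ^ (m - 1) ∧ xj ^ (m - 1) = (xj + α) ^ (m - 1) ∧
      xi ^ m + (xi + α) ^ m = xj ^ m + (xj + α) ^ m) ↔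
    ∃ ζ₁ ζ₂ : AlgebraicClosure (ZMod 2), ζ₁ ≠ ζ₂ ∧ ζ₁ ≠ 1 ∧ ζ₂ ≠ 1 ∧
      ζ₁ ^ (m - 1) = 1 ∧ ζ₂ ^ (m - 1) = 1 ∧ ((1 + ζ₁) / (1 + ζ₂)) ^ (m - 1) = 1 ∧
      xi = ζ₁ * (1 + ζ₂) / (ζ₁ + ζ₂) * α ∧ xj = (1 + ζ₂) / (ζ₁ + ζ₂) * α :=
  stmt10_general m hm α hα xi xj hne
end

section
/- Let m ≥ 7 be odd. For every nonzero α in the algebraic closure of F_2, the polynomial L_α(x^m) has distinct critical values if and only if: for all ζ₁, ζ₂ ≠ 1 in the algebraic closure of F_2 with ζ₁^{m-1} = ζ₂^{m-1} = ((1+ζ₁)/(1+ζ₂))^{m-1} = 1, one has ζ₁ = ζ₂ or ζ₁ = ζ₂⁻¹. -/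
/-!
Parametrise `τ = x (x + α)`. Differentiating `g (x (x + α)) = x ^ m + (x + α) ^ m` in
characteristic 2 gives `α g'(τ) = x ^ (m - 1) + (x + α) ^ (m - 1)`. Writing `x = α / (1 + ζ)`,
i.e. `x + α = ζ x`, the point `τ` is critical exactly when `ζ ^ (m - 1) = 1`, and then
`g τ = α x ^ (m - 1)`. Hence two critical values agree iff
`((1 + ζ₁) / (1 + ζ₂)) ^ (m - 1) = 1`, while two parameters `x, y` give the same `τ` iff
`y = x` or `y = x + α`, i.e. iff `ζ₁ = ζ₂` or `ζ₁ ζ₂ = 1`.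
-/

open Polynomial

section Field

variable {K : Type*} [Field K] {α x y ζ ξ : K} {m : ℕ} {g : K[X]}

theorem exists_mul_add_eq [IsAlgClosed K] (α τ : K) : ∃ x : K, x * (x + α) = τ := by
  have hdeg : (X ^ 2 + C α * X - C τ : K[X]).degree = 2 := by compute_degree!
  obtain ⟨x, hx⟩ := IsAlgClosed.exists_root (X ^ 2 + C α * X - C τ) (by simp [hdeg])
  refine ⟨x, ?_⟩
  simp only [IsRoot, eval_sub, eval_add, eval_pow, eval_mul, eval_C, eval_X] at hx
  linear_combination hx

theorem eval_mul_add_of_comp (hg : g.comp (X * (X + C α)) = X ^ m + (X + C α) ^ m) (x : K) :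
    g.eval (x * (x + α)) = x ^ m + (x + α) ^ m := by
  simpa [eval_comp] using congrArg (eval x) hg

variable [CharP K 2]

/-- `x ^ k + (x + α) ^ k` as a polynomial in `u = x (x + α)`: Newton's recursion for the power
sums of the roots of `T ^ 2 + α T + u`. -/
noncomputable def powerSumPoly (α : K) : ℕ → K[X]
  | 0 => 0
  | 1 => C α
  | k + 2 => C α * powerSumPoly α (k + 1) + X * powerSumPoly α k

theorem powerSumPoly_comp (α : K) :
    ∀ k : ℕ, (powerSumPoly α k).comp (X * (X + C α)) = X ^ k + (X + C α) ^ k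
  | 0 => by
      simp only [powerSumPoly, zero_comp, pow_zero]
      linear_combination -(CharTwo.two_eq_zero : (2 : K[X]) = 0)
  | 1 => by
      simp only [powerSumPoly, C_comp, pow_one]
      linear_combination -X * (CharTwo.two_eq_zero : (2 : K[X]) = 0)
  | k + 2 => by
      simp only [powerSumPoly, add_comp, mul_comp, C_comp, X_comp, powerSumPoly_comp α (k + 1),
        powerSumPoly_comp α k]
      linear_combination (X ^ (k + 1) * (X + C α) - X ^ (k + 2)) *
        (CharTwo.two_eq_zero : (2 : K[X]) = 0)

theorem derivative_eval_mul_add_of_comp (hodd : Odd m)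
    (hg : g.comp (X * (X + C α)) = X ^ m + (X + C α) ^ m) (x : K) :
    (derivative g).eval (x * (x + α)) * α = x ^ (m - 1) + (x + α) ^ (m - 1) := by
  have hm : (m : K) = 1 := by simp [CharTwo.natCast_eq_ite, Nat.not_even_iff_odd.mpr hodd]
  have h := congrArg (fun p => (derivative p).eval x) hg
  simp only [derivative_comp, derivative_mul, derivative_add, derivative_X, derivative_C,
    derivative_pow, eval_mul, eval_add, eval_comp, eval_pow, eval_X, eval_C, hm,
    one_mul, mul_one, add_zero] at h
  linear_combination
    h - (derivative g).eval (x * (x + α)) * x * (CharTwo.two_eq_zero : (2 : K) = 0)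

theorem mul_add_eq_mul_add_iff : x * (x + α) = y * (y + α) ↔ y = x ∨ y = x + α := by
  have h : x * (x + α) - y * (y + α) = (y + x) * (y + (x + α)) := by
    linear_combination (-(y ^ 2 + y * α + x * y)) * (CharTwo.two_eq_zero : (2 : K) = 0)
  rw [← sub_eq_zero, h, mul_eq_zero, CharTwo.add_eq_zero, CharTwo.add_eq_zero]

theorem ne_one_of_one_add_mul_eq (hα : α ≠ 0) (hx : (1 + ζ) * x = α) : ζ ≠ 1 := by
  rintro rfl
  rw [one_add_one_eq_two, CharTwo.two_eq_zero, zero_mul] at hx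
  exact hα hx.symm

theorem add_eq_mul_of_one_add_mul_eq (hx : (1 + ζ) * x = α) : x + α = ζ * x := by
  linear_combination -hx + x * (CharTwo.two_eq_zero : (2 : K) = 0)

theorem mul_add_eq_mul_add_iff_eq_or_eq_inv (hα : α ≠ 0) (hξ0 : ξ ≠ 0)
    (hx : (1 + ζ) * x = α) (hy : (1 + ξ) * y = α) :
    x * (x + α) = y * (y + α) ↔ ζ = ξ ∨ ζ = ξ⁻¹ := by
  have hx0 : x ≠ 0 := right_ne_zero_of_mul (hx ▸ hα)
  have hζ : 1 + ζ ≠ 0 := left_ne_zero_of_mul (hx ▸ hα)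
  have hξ : 1 + ξ ≠ 0 := left_ne_zero_of_mul (hy ▸ hα)
  rw [mul_add_eq_mul_add_iff, add_eq_mul_of_one_add_mul_eq hx, ← mul_eq_one_iff_eq_inv₀ hξ0]
  refine or_congr ⟨fun hyx => ?_, fun hζξ => ?_⟩ ⟨fun hyx => ?_, fun hζξ => ?_⟩
  · subst hyx
    exact add_right_injective 1 (mul_right_cancel₀ hx0 (hx.trans hy.symm))
  · subst hζξ
    exact mul_left_cancel₀ hζ (hy.trans hx.symm)
  · subst hyx
    refine mul_left_cancel₀ hx0 ?_
    linear_combination hy - hx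
  · refine mul_left_cancel₀ hξ ?_
    linear_combination hy - hx - x * hζξ

theorem exists_one_add_mul_eq_of_derivative_eval_eq_zero (hodd : Odd m) (hm : m - 1 ≠ 0)
    (hα : α ≠ 0) (hg : g.comp (X * (X + C α)) = X ^ m + (X + C α) ^ m)
    (hcrit : (derivative g).eval (x * (x + α)) = 0) : ∃ ζ, (1 + ζ) * x = α := by
  have hx0 : x ≠ 0 := by
    rintro rfl
    have h := derivative_eval_mul_add_of_comp hodd hg 0
    rw [hcrit, zero_mul, zero_add, zero_pow hm, zero_add] at h
    exact hα (pow_eq_zero_iff hm |>.mp h.symm)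
  exact ⟨α / x - 1, by rw [add_sub_cancel, div_mul_cancel₀ _ hx0]⟩

theorem derivative_eval_eq_zero_iff_pow_eq_one (hodd : Odd m) (hα : α ≠ 0)
    (hg : g.comp (X * (X + C α)) = X ^ m + (X + C α) ^ m) (hx : (1 + ζ) * x = α) :
    (derivative g).eval (x * (x + α)) = 0 ↔ ζ ^ (m - 1) = 1 := by
  have hx0 : x ≠ 0 := right_ne_zero_of_mul (hx ▸ hα)
  rw [← mul_left_inj' hα, zero_mul, derivative_eval_mul_add_of_comp hodd hg,
    add_eq_mul_of_one_add_mul_eq hx, mul_pow, ← one_add_mul, mul_eq_zero,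
    or_iff_left (pow_ne_zero _ hx0), CharTwo.add_eq_zero, eq_comm]

theorem eval_mul_add_of_pow_eq_one (hodd : Odd m)
    (hg : g.comp (X * (X + C α)) = X ^ m + (X + C α) ^ m) (hx : (1 + ζ) * x = α)
    (hζ : ζ ^ (m - 1) = 1) : g.eval (x * (x + α)) = α * x ^ (m - 1) := by
  have hm : m ≠ 0 := hodd.pos.ne'
  have hζm : ζ ^ m = ζ := by rw [← pow_sub_one_mul hm, hζ, one_mul]
  rw [eval_mul_add_of_comp hg, add_eq_mul_of_one_add_mul_eq hx, mul_pow, hζm,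
    ← pow_sub_one_mul hm x]
  linear_combination x ^ (m - 1) * hx

theorem eval_eq_eval_iff_div_pow_eq_one (hodd : Odd m) (hα : α ≠ 0)
    (hg : g.comp (X * (X + C α)) = X ^ m + (X + C α) ^ m) (hx : (1 + ζ) * x = α)
    (hy : (1 + ξ) * y = α) (hζ : ζ ^ (m - 1) = 1) (hξ : ξ ^ (m - 1) = 1) :
    g.eval (x * (x + α)) = g.eval (y * (y + α)) ↔ ((1 + ζ) / (1 + ξ)) ^ (m - 1) = 1 := by
  have hx0 : x ≠ 0 := right_ne_zero_of_mul (hx ▸ hα)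
  have hratio : (1 + ζ) / (1 + ξ) = y / x := by
    rw [div_eq_div_iff (left_ne_zero_of_mul (hy ▸ hα)) hx0]
    linear_combination hx - hy
  rw [eval_mul_add_of_pow_eq_one hodd hg hx hζ, eval_mul_add_of_pow_eq_one hodd hg hy hξ,
    mul_right_inj' hα, hratio, div_pow, div_eq_one_iff_eq (pow_ne_zero _ hx0), eq_comm]

end Field

/-- `L_α(x^m)` has distinct critical values for all nonzero `α` iff the root-of-unity
condition defining the set `M` holds. -/
theorem stmt11 (m : ℕ) (hm : 7 ≤ m) (hodd : Odd m) :
    (∀ α : AlgebraicClosure (ZMod 2), α ≠ 0 →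
      ∀ g : Polynomial (AlgebraicClosure (ZMod 2)),
        g.comp (X * (X + C α)) = X ^ m + (X + C α) ^ m →
        ∀ τ η, (derivative g).eval τ = 0 → (derivative g).eval η = 0 →
          g.eval τ = g.eval η → τ = η) ↔
    (∀ ζ₁ ζ₂ : AlgebraicClosure (ZMod 2), ζ₁ ≠ 1 → ζ₂ ≠ 1 →
      ζ₁ ^ (m - 1) = 1 → ζ₂ ^ (m - 1) = 1 → ((1 + ζ₁) / (1 + ζ₂)) ^ (m - 1) = 1 →
      ζ₁ = ζ₂ ∨ ζ₁ = ζ₂⁻¹) := by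
  have hm1 : m - 1 ≠ 0 := by omega
  have ne_zero_of_pow {ζ : AlgebraicClosure (ZMod 2)} (hζ : ζ ^ (m - 1) = 1) : ζ ≠ 0 :=
    ne_zero_pow hm1 (hζ ▸ one_ne_zero)
  constructor
  · intro h ζ ξ hζ hξ hζm hξm hζξ
    have hx : (1 + ζ) * (1 + ζ)⁻¹ = 1 :=
      mul_inv_cancel₀ fun h0 => hζ (CharTwo.add_eq_zero.mp h0).symm
    have hy : (1 + ξ) * (1 + ξ)⁻¹ = 1 :=
      mul_inv_cancel₀ fun h0 => hξ (CharTwo.add_eq_zero.mp h0).symm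
    have hg := powerSumPoly_comp (1 : AlgebraicClosure (ZMod 2)) m
    have hζc := (derivative_eval_eq_zero_iff_pow_eq_one hodd one_ne_zero hg hx).mpr hζm
    have hξc := (derivative_eval_eq_zero_iff_pow_eq_one hodd one_ne_zero hg hy).mpr hξm
    refine (mul_add_eq_mul_add_iff_eq_or_eq_inv one_ne_zero (ne_zero_of_pow hξm) hx hy).mp ?_
    exact h 1 one_ne_zero _ hg _ _ hζc hξc
      ((eval_eq_eval_iff_div_pow_eq_one hodd one_ne_zero hg hx hy hζm hξm).mpr hζξ)
  · intro h α hα g hg τ η hτ hη hτη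
    obtain ⟨x, rfl⟩ := exists_mul_add_eq α τ
    obtain ⟨y, rfl⟩ := exists_mul_add_eq α η
    obtain ⟨ζ, hx⟩ := exists_one_add_mul_eq_of_derivative_eval_eq_zero hodd hm1 hα hg hτ
    obtain ⟨ξ, hy⟩ := exists_one_add_mul_eq_of_derivative_eval_eq_zero hodd hm1 hα hg hη
    rw [derivative_eval_eq_zero_iff_pow_eq_one hodd hα hg hx] at hτ
    rw [derivative_eval_eq_zero_iff_pow_eq_one hodd hα hg hy] at hη
    rw [eval_eq_eval_iff_div_pow_eq_one hodd hα hg hx hy hτ hη] at hτη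
    exact (mul_add_eq_mul_add_iff_eq_or_eq_inv hα (ne_zero_of_pow hη) hx hy).mpr
      (h ζ ξ (ne_one_of_one_add_mul_eq hα hx) (ne_one_of_one_add_mul_eq hα hy) hτ hη hτη)
end

section
/- For every k ≥ 0, the integer m = 2^k + 2 satisfies: if ζ₁, ζ₂ are (m-1)-th roots of unity in the algebraic closure of F_2, ζ₁, ζ₂ ≠ 1, and ((1+ζ₁)/(1+ζ₂))^{m-1} = 1, then ζ₁ = ζ₂ or ζ₁ = ζ₂⁻¹. -/
open Polynomial

lemma charTwoAddEqZero {R : Type*} [Ring R] [CharP R 2] {a b : R}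
    (h : a + b = 0) : a = b := by
  have := CharTwo.sub_eq_add a b
  rw [← this] at h
  exact sub_eq_zero.mp h

/-- The integers `m = 2^k + 2` satisfy the root-of-unity condition. -/
theorem stmt13 (k : ℕ) :
    ∀ ζ₁ ζ₂ : AlgebraicClosure (ZMod 2), ζ₁ ≠ 1 → ζ₂ ≠ 1 →
      ζ₁ ^ (2 ^ k + 2 - 1) = 1 → ζ₂ ^ (2 ^ k + 2 - 1) = 1 →
      ((1 + ζ₁) / (1 + ζ₂)) ^ (2 ^ k + 2 - 1) = 1 →
      ζ₁ = ζ₂ ∨ ζ₁ = ζ₂⁻¹ := by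
  intro ζ₁ ζ₂ h1 h2 hp1 hp2 hdiv
  let F := AlgebraicClosure (ZMod 2)
  haveI : CharP F 2 := charP_of_injective_algebraMap
    (algebraMap (ZMod 2) F).injective 2
  have hn : 2 ^ k + 2 - 1 = 2 ^ k + 1 := rfl
  rw [hn] at hp1 hp2 hdiv
  have h2z : (2 : F) = 0 := CharTwo.two_eq_zero
  -- 1 + ζᵢ ≠ 0
  have hz : ∀ ζ : F, ζ ≠ 1 → 1 + ζ ≠ 0 := by
    intro ζ hζ h
    exact hζ (charTwoAddEqZero h).symm
  have hz1 := hz ζ₁ h1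
  have hz2 := hz ζ₂ h2
  have hne1 : ζ₁ ≠ 0 := by
    rintro rfl; simp at hp1
  have hne2 : ζ₂ ≠ 0 := by
    rintro rfl; simp at hp2
  -- inverse formula
  have hi1 : ζ₁ ^ (2 ^ k) = ζ₁⁻¹ := by
    apply eq_inv_of_mul_eq_one_left
    rw [← pow_succ]; exact hp1
  have hi2 : ζ₂ ^ (2 ^ k) = ζ₂⁻¹ := by
    apply eq_inv_of_mul_eq_one_left
    rw [← pow_succ]; exact hp2
  -- key formula
  have key : ∀ ζ : F, ζ ^ (2 ^ k + 1) = 1 →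
      (1 + ζ) ^ (2 ^ k + 1) = ζ + ζ ^ (2 ^ k) := by
    intro ζ hζ
    have h2pow : (1 + ζ) ^ (2 ^ k) = 1 + ζ ^ (2 ^ k) := by
      rw [add_pow_char_pow, one_pow]
    have hstep : (1 + ζ) ^ (2 ^ k + 1) = (1 + ζ ^ (2 ^ k)) * (1 + ζ) := by
      rw [pow_succ, h2pow]
    rw [hstep]
    have hmul : ζ ^ (2 ^ k) * ζ = 1 := by rw [← pow_succ]; exact hζ
    linear_combination hmul + h2z
  have e1 := key ζ₁ hp1
  have e2 := key ζ₂ hp2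
  -- equality of powers
  have heq : (1 + ζ₁) ^ (2 ^ k + 1) = (1 + ζ₂) ^ (2 ^ k + 1) := by
    rw [div_pow, div_eq_one_iff_eq (pow_ne_zero _ hz2)] at hdiv
    exact hdiv
  rw [e1, e2, hi1, hi2] at heq
  -- factorization
  have h' : ζ₁ * ζ₁⁻¹ = 1 := mul_inv_cancel₀ hne1
  have h'' : ζ₂ * ζ₂⁻¹ = 1 := mul_inv_cancel₀ hne2
  have hfac : (ζ₁ + ζ₂) * (ζ₁ * ζ₂ + 1) = 0 := by
    linear_combination (ζ₁ * ζ₂) * heq - ζ₂ * h' + ζ₁ * h''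
      + (ζ₁ * ζ₂ ^ 2 + ζ₁) * h2z
  rcases mul_eq_zero.mp hfac with h | h
  · left; exact charTwoAddEqZero h
  · right
    apply eq_inv_of_mul_eq_one_left
    have := charTwoAddEqZero h
    linear_combination this
end

section
/- For k ≥ 4 and m = 2^k - 1, the root-of-unity condition fails: there exist ζ₁, ζ₂ ≠ 1 in the algebraic closure of F_2 with ζ₁^{m-1} = ζ₂^{m-1} = ((1+ζ₁)/(1+ζ₂))^{m-1} = 1 but ζ₁ ≠ ζ₂ and ζ₁ζ₂ ≠ 1. (Take ζ₁, ζ₂ any roots of x^{2^{k-1}-1} = 1 with ζ₁ ≠ ζ₂, ζ₁ζ₂ ≠ 1; then (1+ζ₁)^{2^{k-1}-1}·(1+ζ₁) = (1+ζ₁)^{2^{k-1}} = 1 + ζ₁^{2^{k-1}} shows (1+ζ_i) is also such a root of unity.) -/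
open Polynomial

/-- For `m = 2^k - 1`, `k ≥ 4`, the root-of-unity condition fails. -/
theorem stmt14 (k : ℕ) (hk : 4 ≤ k) :
    ∃ ζ₁ ζ₂ : AlgebraicClosure (ZMod 2), ζ₁ ≠ 1 ∧ ζ₂ ≠ 1 ∧
      ζ₁ ^ (2 ^ k - 1 - 1) = 1 ∧ ζ₂ ^ (2 ^ k - 1 - 1) = 1 ∧
      ((1 + ζ₁) / (1 + ζ₂)) ^ (2 ^ k - 1 - 1) = 1 ∧
      ζ₁ ≠ ζ₂ ∧ ζ₁ * ζ₂ ≠ 1 := by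
  set F := AlgebraicClosure (ZMod 2)
  have hchar : CharP F 2 := inferInstance
  set n : ℕ := 2 ^ (k - 1) - 1 with hn
  have hpow : 2 ^ (k - 1) ≥ 2 ^ 3 := Nat.pow_le_pow_right (by norm_num) (by omega)
  have hn7 : 7 ≤ n := by omega
  have hodd : ¬ (2 ∣ n) := by
    have h2 : 2 ∣ 2 ^ (k - 1) := dvd_pow_self 2 (by omega)
    omega
  have hnz : NeZero ((n : F)) := ⟨fun h => hodd ((CharP.cast_eq_zero_iff F 2 n).mp h)⟩
  obtain ⟨ζ, hζ⟩ := HasEnoughRootsOfUnity.exists_primitiveRoot F n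
  have hζn : ζ ^ n = 1 := hζ.pow_eq_one
  have horder : ∀ l : ℕ, 0 < l → ζ ^ l = 1 → n ≤ l := fun l hl h =>
    Nat.le_of_dvd hl (hζ.dvd_of_pow_eq_one l h)
  have hne : ζ ≠ 0 := hζ.ne_zero (by omega)
  have hζ1 : ζ ≠ 1 := by
    intro h; have := horder 1 one_pos (by simpa using h); omega
  have hζ21 : ζ ^ 2 ≠ 1 := by
    intro h; have := horder 2 two_pos h; omega
  have hexp : 2 ^ k - 1 - 1 = 2 * n := by
    have : 2 ^ k = 2 * 2 ^ (k - 1) := by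
      rw [← pow_succ']; congr 1; omega
    omega
  have key : ∀ x : F, x ≠ 1 → x ^ n = 1 → (1 + x) ^ n = 1 := by
    intro x hx1 hx
    have hne0 : (1 + x) ≠ 0 := by
      intro h
      exact hx1 (by rw [eq_neg_of_add_eq_zero_right h, CharTwo.neg_eq])
    have hfrob : (1 + x) ^ (2 ^ (k - 1)) = 1 + x := by
      rw [add_pow_char_pow, one_pow]
      congr 1
      have h1 : x ^ (2 : ℕ) ^ (k - 1) = x ^ (n + 1) := by congr 1; omega
      rw [h1, pow_succ, hx, one_mul]
    have h2 : (1 + x) ^ (n + 1) = (1 + x) ^ (2 ^ (k - 1)) := by congr 1; omega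
    rw [hfrob, pow_succ] at h2
    exact mul_right_cancel₀ hne0 (by rw [h2, one_mul])
  refine ⟨ζ, ζ ^ 2, hζ1, hζ21, ?_, ?_, ?_, ?_, ?_⟩
  · rw [hexp, mul_comm, pow_mul, hζn, one_pow]
  · rw [hexp, ← pow_mul, show 2 * (2 * n) = n * 4 by ring, pow_mul, hζn, one_pow]
  · have h1 : (1 + ζ) ^ n = 1 := key ζ hζ1 hζn
    have h2 : (1 + ζ ^ 2) ^ n = 1 := key (ζ ^ 2) hζ21
      (by rw [← pow_mul, mul_comm, pow_mul, hζn, one_pow])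
    rw [hexp, div_pow, mul_comm, pow_mul, pow_mul, h1, h2]; norm_num
  · intro h
    have h2 : ζ * ζ = ζ * 1 := by rw [mul_one, ← sq]; exact h.symm
    exact hζ1 (mul_left_cancel₀ hne h2)
  · intro h
    have h3 : ζ ^ 3 = 1 := by
      rw [show (3:ℕ) = 1 + 2 by norm_num, pow_add, pow_one]; exact h
    have := horder 3 (by norm_num) h3; omega
end

section
/- Let p, ℓ be distinct primes with ℓ odd and p^{ℓ-1} ≢ 1 (mod ℓ²). Suppose that whenever ζ₁, ζ₂ ≠ 1 are ℓ-th roots of unity in characteristic p such that (ζ₁+1)/(ζ₂+1) is also an ℓ-th root of unity, then ζ₁ = ζ₂ or ζ₁ = ζ₂⁻¹. Then for any k ≥ 2, whenever ζ₁, ζ₂ ≠ 1 are ℓ^k-th roots of unity in characteristic p such that (ζ₁+1)/(ζ₂+1) is also an ℓ^k-th root of unity, then ζ₁ = ζ₂ or ζ₁ = ζ₂⁻¹. -/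
/-!
For `n ≥ 1` let `q = p ^ ((ℓ - 1) ℓ ^ (n - 1))`; lifting the exponent (`ℓ` odd, `p` not
Wieferich) gives `v_ℓ(q - 1) = n`. The Frobenius `σ x = x ^ q` multiplies an `ℓ ^ (n + 1)`-th
root of unity `x` by the `ℓ`-th root of unity `x ^ (q - 1)`, which is `1` exactly when
`x ^ ℓ ^ n = 1`. If `σ` fixes `ζ₁` and `ζ₂`, it fixes `η = (ζ₁ + 1) / (ζ₂ + 1)`, and all three
descend to level `n`. Otherwise, say `σ ζ₂ = β ζ₂` with `β` a primitive `ℓ`-th root of unity;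
iterating `σ` gives `ζ₁ α ^ j + 1 = η ε ^ j (ζ₂ β ^ j + 1)` for all `j`, so a polynomial of degree
`< ℓ` with four monomials vanishes at all `ℓ`-th roots of unity. Comparing its coefficients
forces `η = 1`, or `ζ₁ = η = ζ₂⁻¹`.
-/

open Polynomial

theorem padicValNat_pow_sub_one_of_not_wieferich {p ℓ : ℕ} [Fact ℓ.Prime] (hp : p.Prime)
    (hl2 : ℓ ≠ 2) (hne : p ≠ ℓ) (hwief : ¬ p ^ (ℓ - 1) ≡ 1 [MOD ℓ ^ 2]) (m : ℕ) :
    padicValNat ℓ (p ^ ((ℓ - 1) * ℓ ^ m) - 1) = m + 1 := by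
  have hl : ℓ.Prime := Fact.out
  have hlt : 1 < p ^ (ℓ - 1) := Nat.one_lt_pow (by have := hl.two_le; omega) hp.one_lt
  have hfermat : ℓ ∣ p ^ (ℓ - 1) - 1 := by
    have := Nat.ModEq.pow_totient ((Nat.coprime_primes hp hl).mpr hne)
    rw [Nat.totient_prime hl] at this
    exact (Nat.modEq_iff_dvd' hlt.le).mp this.symm
  have hval : padicValNat ℓ (p ^ (ℓ - 1) - 1) = 1 := by
    have hsq : ¬ ℓ ^ 2 ∣ p ^ (ℓ - 1) - 1 := fun h => hwief ((Nat.modEq_iff_dvd' hlt.le).mpr h).symm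
    rw [padicValNat_dvd_iff_le (by omega)] at hsq
    have := one_le_padicValNat_of_dvd (by omega) hfermat
    omega
  rw [pow_mul,
    show (p ^ (ℓ - 1)) ^ ℓ ^ m - 1 = (p ^ (ℓ - 1)) ^ ℓ ^ m - 1 ^ ℓ ^ m by rw [one_pow],
    padicValNat.pow_sub_pow (hl.odd_of_ne_two hl2) hlt hfermat
    (fun h => hne ((Nat.prime_dvd_prime_iff_eq hl hp).mp (hl.dvd_of_dvd_pow h)).symm)
    (pow_ne_zero _ hl.ne_zero), hval, padicValNat.prime_pow]
  ring

theorem pow_prime_pow_padicValNat_eq_one {M : Type*} [Monoid M] {ℓ : ℕ} [Fact ℓ.Prime] {x : M}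
    {K N : ℕ} (hK : x ^ ℓ ^ K = 1) (hN : N ≠ 0) (hxN : x ^ N = 1) :
    x ^ ℓ ^ padicValNat ℓ N = 1 := by
  obtain ⟨i, -, hi⟩ := (Nat.dvd_prime_pow Fact.out).mp (orderOf_dvd_of_pow_eq_one hK)
  have : i ≤ padicValNat ℓ N :=
    (padicValNat_dvd_iff_le hN).mp (hi ▸ orderOf_dvd_of_pow_eq_one hxN)
  exact orderOf_dvd_iff_pow_eq_one.mp (hi ▸ pow_dvd_pow ℓ this)

theorem RingHom.iterate_map_eq_pow_mul {R : Type*} [CommSemiring R] (σ : R →+* R) {c x : R}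
    (hc : σ c = c) (hx : σ x = c * x) (j : ℕ) : σ^[j] x = c ^ j * x := by
  induction j with
  | zero => simp
  | succ j ih => rw [Function.iterate_succ_apply', ih, map_mul, map_pow, hc, hx]; ring

theorem Polynomial.eq_zero_of_eval_pow_eq_zero {R : Type*} [CommRing R] [IsDomain R] {β : R}
    {ℓ : ℕ} (hβ : IsPrimitiveRoot β ℓ) {P : R[X]} (hP : P.natDegree < ℓ)
    (h : ∀ j, P.eval (β ^ j) = 0) : P = 0 :=
  eq_zero_of_natDegree_lt_card_of_eval_eq_zero P (f := fun j : Fin ℓ => β ^ (j : ℕ))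
    (fun i j hij => Fin.ext (hβ.pow_inj i.2 j.2 hij)) (fun j => h j) (by simpa using hP)

theorem eq_or_eq_inv_of_forall_pow {F : Type*} [Field F] {ℓ : ℕ} (hℓ : 1 < ℓ)
    {ζ₁ ζ₂ η α β ε : F} (hα : α ^ ℓ = 1) (hβ : IsPrimitiveRoot β ℓ) (hε : ε ^ ℓ = 1)
    (hζ₂ : ζ₂ ≠ 0) (hη : η ≠ 0) (h : ∀ j : ℕ, ζ₁ * α ^ j + 1 = η * ε ^ j * (ζ₂ * β ^ j + 1)) :
    ζ₁ = ζ₂ ∨ ζ₁ = ζ₂⁻¹ := by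
  classical
  have : NeZero ℓ := ⟨by omega⟩
  obtain ⟨a, ha, rfl⟩ := hβ.eq_pow_of_pow_eq_one hα
  obtain ⟨c, hc, rfl⟩ := hβ.eq_pow_of_pow_eq_one hε
  set d := (c + 1) % ℓ with hd_def
  have hd : d < ℓ := Nat.mod_lt _ (by omega)
  have hdc : d ≠ c := by
    rcases Nat.lt_or_ge (c + 1) ℓ with hlt | hge
    · rw [hd_def, Nat.mod_eq_of_lt hlt]; omega
    · rw [hd_def, show c + 1 = ℓ by omega, Nat.mod_self]; omega
  set P : F[X] := C ζ₁ * X ^ a + 1 - C (η * ζ₂) * X ^ d - C η * X ^ c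
  have hcoeff : ∀ m, P.coeff m = (if m = a then ζ₁ else 0) + (if m = 0 then 1 else 0)
      - (if m = d then η * ζ₂ else 0) - (if m = c then η else 0) := by
    intro m
    simp only [P, coeff_sub, coeff_add, coeff_C_mul_X_pow, coeff_one]
  -- The relation at `j` says that `P` vanishes at `β ^ j`, since `β ^ d = β ^ (c + 1)`.
  have hP : P = 0 := by
    refine eq_zero_of_eval_pow_eq_zero hβ ?_ fun j => ?_
    · refine Nat.lt_of_le_sub_one (by omega) (natDegree_le_iff_coeff_eq_zero.mpr fun m hm => ?_)
      rw [hcoeff, if_neg (by omega), if_neg (by omega), if_neg (by omega), if_neg (by omega)]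
      ring
    · have hβd : β ^ d = β ^ c * β := by rw [← pow_succ, ← pow_eq_pow_mod _ hβ.pow_eq_one]
      simp only [P, eval_sub, eval_add, eval_mul, eval_C, eval_pow, eval_X, eval_one]
      rw [pow_right_comm, pow_right_comm β j d, pow_right_comm β j c, hβd, mul_pow]
      linear_combination h j
  have hcoeff_c := hcoeff c
  have hcoeff_d := hcoeff d
  rw [hP, coeff_zero, if_neg hdc.symm, if_pos rfl] at hcoeff_c
  rw [hP, coeff_zero, if_neg hdc, if_pos rfl] at hcoeff_d
  by_cases hc0 : c = 0
  · have had : a = d := by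
      by_contra had
      rw [if_neg (Ne.symm had), if_neg (by omega)] at hcoeff_d
      exact mul_ne_zero hη hζ₂ (by linear_combination hcoeff_d)
    rw [if_neg (by omega), if_pos hc0] at hcoeff_c
    left
    simpa [show η = 1 by linear_combination hcoeff_c] using h 0
  · have hac : a = c := by
      by_contra hac
      rw [if_neg (Ne.symm hac), if_neg hc0] at hcoeff_c
      exact hη (by linear_combination hcoeff_c)
    rw [if_pos hac.symm, if_neg hc0] at hcoeff_c
    rw [if_neg (by omega)] at hcoeff_d
    have hd0 : d = 0 := by
      by_contra hd0
      rw [if_neg hd0] at hcoeff_d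
      exact mul_ne_zero hη hζ₂ (by linear_combination hcoeff_d)
    rw [if_pos hd0] at hcoeff_d
    right
    exact eq_inv_of_mul_eq_one_left (by linear_combination -ζ₂ * hcoeff_c + hcoeff_d)

theorem eq_or_eq_inv_of_map_eq_mul {F : Type*} [Field F] {ℓ : ℕ} [Fact ℓ.Prime] (σ : F →+* F)
    (hσ : ∀ x : F, x ^ ℓ = 1 → σ x = x) {ζ₁ ζ₂ η α β ε : F} (hα : α ^ ℓ = 1) (hβ : β ^ ℓ = 1)
    (hε : ε ^ ℓ = 1) (hαβ : α ≠ 1 ∨ β ≠ 1) (h₁ : σ ζ₁ = α * ζ₁) (h₂ : σ ζ₂ = β * ζ₂)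
    (h₃ : σ η = ε * η) (hζ₁ : ζ₁ ≠ 0) (hζ₂ : ζ₂ ≠ 0) (hη : η ≠ 0)
    (h : ζ₁ + 1 = η * (ζ₂ + 1)) : ζ₁ = ζ₂ ∨ ζ₁ = ζ₂⁻¹ := by
  wlog hβ1 : β ≠ 1 generalizing ζ₁ ζ₂ η α β ε
  · have hα1 : α ≠ 1 := hαβ.resolve_right hβ1
    have hση : σ η⁻¹ = ε⁻¹ * η⁻¹ := by rw [map_inv₀, h₃, mul_inv]
    rcases this hβ hα (by rw [inv_pow, hε, inv_one]) hαβ.symm h₂ h₁ hση hζ₂ hζ₁ (inv_ne_zero hη)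
      (by rw [h, inv_mul_cancel_left₀ hη]) hα1 with h | h
    exacts [Or.inl h.symm, Or.inr (inv_eq_iff_eq_inv.mp h.symm)]
  have hβ' : IsPrimitiveRoot β ℓ := orderOf_eq_prime hβ hβ1 ▸ IsPrimitiveRoot.orderOf β
  refine eq_or_eq_inv_of_forall_pow (Fact.out : ℓ.Prime).one_lt hα hβ' hε hζ₂ hη fun j => ?_
  have := congrArg (σ ^ j) h
  simp only [map_add, map_mul, map_one, RingHom.coe_pow,
    σ.iterate_map_eq_pow_mul (hσ α hα) h₁, σ.iterate_map_eq_pow_mul (hσ β hβ) h₂,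
    σ.iterate_map_eq_pow_mul (hσ ε hε) h₃] at this
  linear_combination this

def RootRatioRigid (F : Type*) [Field F] (N : ℕ) : Prop :=
  ∀ ζ₁ ζ₂ : F, ζ₁ ≠ 1 → ζ₂ ≠ 1 → ζ₁ ^ N = 1 → ζ₂ ^ N = 1 → ((ζ₁ + 1) / (ζ₂ + 1)) ^ N = 1 →
    ζ₁ = ζ₂ ∨ ζ₁ = ζ₂⁻¹

theorem RootRatioRigid.pow_succ {F : Type*} [Field F] {p ℓ : ℕ} [ExpChar F p] [Fact ℓ.Prime]
    {n f : ℕ} (hf : padicValNat ℓ (p ^ f - 1) = n + 1) (h : RootRatioRigid F (ℓ ^ (n + 1))) :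
    RootRatioRigid F (ℓ ^ (n + 2)) := by
  intro ζ₁ ζ₂ hζ₁ hζ₂ h₁ h₂ hη
  set q := p ^ f
  set σ := iterateFrobenius F p f
  have hq : q - 1 ≠ 0 := fun h0 => by simp [h0] at hf
  have hσ : ∀ x : F, σ x = x ^ (q - 1) * x := fun x => (pow_sub_one_mul (by omega) x).symm
  have hdvd : ℓ ^ (n + 1) ∣ q - 1 := hf ▸ pow_padicValNat_dvd
  have hσfix : ∀ x : F, x ^ ℓ = 1 → σ x = x := fun x hx => by
    rw [hσ, (orderOf_dvd_iff_pow_eq_one.mp ((orderOf_dvd_of_pow_eq_one hx).trans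
      ((dvd_pow_self ℓ n.succ_ne_zero).trans hdvd))), one_mul]
  have hroot : ∀ x : F, x ^ ℓ ^ (n + 2) = 1 → (x ^ (q - 1)) ^ ℓ = 1 := fun x hx => by
    rw [← pow_mul]
    exact orderOf_dvd_iff_pow_eq_one.mp ((orderOf_dvd_of_pow_eq_one hx).trans
      (_root_.pow_succ ℓ (n + 1) ▸ mul_dvd_mul_right hdvd ℓ))
  have hdescend : ∀ x : F, x ^ ℓ ^ (n + 2) = 1 → x ^ (q - 1) = 1 → x ^ ℓ ^ (n + 1) = 1 :=
    fun x hx hxq => hf ▸ pow_prime_pow_padicValNat_eq_one hx hq hxq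
  have hN : ℓ ^ (n + 2) ≠ 0 := pow_ne_zero _ (Fact.out : ℓ.Prime).ne_zero
  set η := (ζ₁ + 1) / (ζ₂ + 1)
  have hη0 : η ≠ 0 := (IsUnit.of_pow_eq_one hη hN).ne_zero
  have hden : ζ₂ + 1 ≠ 0 := fun h0 => hη0 (by simp [η, h0])
  by_cases hfix : ζ₁ ^ (q - 1) = 1 ∧ ζ₂ ^ (q - 1) = 1
  · have hση : σ η = η := by
      simp only [η, map_div₀, map_add, map_one, hσ ζ₁, hσ ζ₂, hfix.1, hfix.2, one_mul]
    have hηq : η ^ (q - 1) = 1 := by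
      rw [hσ] at hση
      exact (mul_eq_right₀ hη0).mp hση
    exact h ζ₁ ζ₂ hζ₁ hζ₂ (hdescend ζ₁ h₁ hfix.1) (hdescend ζ₂ h₂ hfix.2) (hdescend η hη hηq)
  · exact eq_or_eq_inv_of_map_eq_mul σ hσfix (hroot ζ₁ h₁) (hroot ζ₂ h₂) (hroot η hη)
      (not_and_or.mp hfix) (hσ ζ₁) (hσ ζ₂) (hσ η) (IsUnit.of_pow_eq_one h₁ hN).ne_zero
      (IsUnit.of_pow_eq_one h₂ hN).ne_zero hη0 (div_mul_cancel₀ _ hden).symm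

/-- Lifting of the root-of-unity condition from `ℓ`-th roots of unity to `ℓ^k`-th
roots of unity under the non-Wieferich condition. -/
theorem stmt15 (p ℓ : ℕ) [Fact p.Prime] (hl : ℓ.Prime) (hne : p ≠ ℓ) (hl2 : ℓ ≠ 2)
    (hwief : ¬ p ^ (ℓ - 1) ≡ 1 [MOD ℓ ^ 2])
    (h1 : ∀ ζ₁ ζ₂ : AlgebraicClosure (ZMod p), ζ₁ ≠ 1 → ζ₂ ≠ 1 →
      ζ₁ ^ ℓ = 1 → ζ₂ ^ ℓ = 1 → ((ζ₁ + 1) / (ζ₂ + 1)) ^ ℓ = 1 → ζ₁ = ζ₂ ∨ ζ₁ = ζ₂⁻¹) :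
    ∀ k, 2 ≤ k → ∀ ζ₁ ζ₂ : AlgebraicClosure (ZMod p), ζ₁ ≠ 1 → ζ₂ ≠ 1 →
      ζ₁ ^ ℓ ^ k = 1 → ζ₂ ^ ℓ ^ k = 1 → ((ζ₁ + 1) / (ζ₂ + 1)) ^ ℓ ^ k = 1 →
      ζ₁ = ζ₂ ∨ ζ₁ = ζ₂⁻¹ := by
  have : Fact ℓ.Prime := ⟨hl⟩
  have hrigid (m : ℕ) : RootRatioRigid (AlgebraicClosure (ZMod p)) (ℓ ^ (m + 1)) := by
    induction m with
    | zero => simpa [RootRatioRigid] using h1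
    | succ m ih =>
      exact ih.pow_succ (padicValNat_pow_sub_one_of_not_wieferich Fact.out hl2 hne hwief m)
  intro k hk
  obtain ⟨m, rfl⟩ : ∃ m, k = m + 1 := ⟨k - 1, by omega⟩
  exact hrigid m
end
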